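/- Let λ ≥ 2, k = 2λ, g ≥ 2, d ≥ 0, h ≥ 1 with (g−1)(λ−1) < h and h + d ≤ (g−1)λ. Then for any integers ε_2, …, ε_g with 0 ≤ ε_i ≤ k−1 and Σ ε_i = d + h + (g−1)(λ−1), one has Σ_{i=2}^{g} ⌊(ε_i+1)/2⌋ > h + ⌊(d−1)/2⌋. -/
import Mathlib


theorem stmt_4 (l k g d h : ℕ) (hl : 2 ≤ l) (hk : k = 2 * l) (hg : 2 ≤ g)
    (hh : 1 ≤ h) (h1 : (g - 1) * (l - 1) < h) (h2 : h + d ≤ (g - 1) * l)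
    (ε : Fin (g - 1) → ℕ) (hub : ∀ i, ε i ≤ k - 1)
    (hsum : ∑ i, ε i = d + h + (g - 1) * (l - 1)) :
    (h : ℤ) + ((d : ℤ) - 1) / 2 < ∑ i, ((ε i + 1 : ℕ) / 2 : ℤ) := by
  have key : ∀ i, ε i + 1 ≤ (ε i + 1) / 2 + l := by
    intro i
    have := hub i
    omega
  have hsum2 : ∑ i, (ε i + 1) ≤ ∑ i, ((ε i + 1) / 2 + l) :=
    Finset.sum_le_sum fun i _ => key i
  rw [Finset.sum_add_distrib, Finset.sum_add_distrib, Finset.sum_const,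
    Finset.sum_const, Finset.card_univ, Fintype.card_fin, smul_eq_mul,
    smul_eq_mul, mul_one, hsum] at hsum2
  set T := ∑ i, (ε i + 1) / 2 with hT
  have hmul : (g - 1) * (l - 1) + (g - 1) = (g - 1) * l := by
    obtain ⟨m, rfl⟩ : ∃ m, l = m + 1 := ⟨l - 1, by omega⟩
    simp [Nat.mul_succ]
  have hT2 : d + h ≤ T := by omega
  have hcast : (∑ i, ((ε i + 1 : ℕ) / 2 : ℤ)) = (T : ℤ) := by
    rw [hT]
    push_cast
    rfl
  rw [hcast]
  omega
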